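/- (Kemperman's formula / hitting time theorem.) Let R be an upwards skip-free random walk starting at 0, i.e. R(n) = Y(1) + ⋯ + Y(n) with R(0) = 0, where (Y(i)) are i.i.d. integer-valued random variables with P(Y(i) ≤ 1) = 1. For an integer k ≥ 1 let τ(k) = inf{ n ≥ 0 : R(n) ≥ k } be the first time R crosses the level k (since R has increments at most 1, R(τ(k)) = k on {τ(k) < ∞}). Then for every n ≥ 1, n · P(τ(k) = n) = k · P(R(n) = k). -/

import Mathlib

/-!
Cycle lemma: among the `n` cyclic rotations of integers `y₀, …, yₙ₋₁ ≤ 1` with sum `k`, exactly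
`k` first reach level `k` at time `n`. Indeed, extend the partial sums `S` periodically, so that
`S (t + n) = S t + k`; rotation `j` first passes `k` at time `n` iff `j + n` is a strict record time
of `S`. Since `S` climbs by at most one per step, its running maximum grows by exactly one at each
strict record, hence by `k` over any window of length `n`.

The increments being i.i.d., all rotations of `(Y 0, …, Y (n - 1))` have the same law, so
`n · P(τ k = n)` is the expected number of rotations that first pass `k` at time `n`, which is
`k · P(R n = k)`.
-/

open MeasureTheory ProbabilityTheory Finset Fin.NatCast

section SkipFree

variable {S : ℕ → ℤ} {n k : ℕ}

lemma partialSups_lt_iff {α ι : Type*} [LinearOrder α] [Preorder ι] [LocallyFiniteOrderBot ι]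
    {f : ι → α} {i : ι} {a : α} : partialSups f i < a ↔ ∀ j ≤ i, f j < a := by
  rw [partialSups_apply, sup'_lt_iff]
  simp

lemma partialSups_succ_of_le_add_one (hskip : ∀ t, S (t + 1) ≤ S t + 1) (j : ℕ) :
    partialSups S (j + 1) = partialSups S j + if ∀ t < j + 1, S t < S (j + 1) then 1 else 0 := by
  have hrec : (∀ t < j + 1, S t < S (j + 1)) ↔ partialSups S j < S (j + 1) := by
    simp only [partialSups_lt_iff, Nat.lt_succ_iff]
  have : S j ≤ partialSups S j := le_partialSups S j
  have := hskip j
  rw [← Order.succ_eq_add_one, partialSups_succ, Order.succ_eq_add_one]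
  split_ifs with h
  · have := hrec.1 h
    omega
  · have := mt hrec.2 h
    omega

lemma partialSups_add_period (hper : ∀ t, S (t + n) = S t + k) {a : ℕ} (ha : n ≤ a + 1) :
    partialSups S (a + n) = partialSups S a + k := by
  apply le_antisymm
  · refine partialSups_le _ _ _ fun t ht => ?_
    rcases le_or_gt t a with hta | hat
    · have := le_partialSups_of_le S hta
      omega
    · obtain ⟨t', rfl⟩ : ∃ t', t = t' + n := ⟨t - n, by omega⟩
      have := le_partialSups_of_le S (show t' ≤ a by omega)
      rw [hper]
      omega
  · suffices partialSups S a ≤ partialSups S (a + n) - k by omega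
    refine partialSups_le _ _ _ fun t ht => ?_
    have := le_partialSups_of_le S (show t + n ≤ a + n by omega)
    rw [hper] at this
    omega

lemma card_filter_strictRecord_add_period (hskip : ∀ t, S (t + 1) ≤ S t + 1)
    (hper : ∀ t, S (t + n) = S t + k) (hn : 0 < n) :
    #{j ∈ range n | ∀ t < j + n, S t < S (j + n)} = k := by
  obtain ⟨a, rfl⟩ : ∃ a, n = a + 1 := ⟨n - 1, by omega⟩
  have hstep (j : ℕ) : (if ∀ t < j + (a + 1), S t < S (j + (a + 1)) then 1 else 0 : ℤ)
      = partialSups S (a + (j + 1)) - partialSups S (a + j) := by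
    rw [show a + (j + 1) = a + j + 1 by omega, partialSups_succ_of_le_add_one hskip,
      show a + j + 1 = j + (a + 1) by omega]
    split_ifs <;> simp
  rw [card_filter]
  zify
  rw [sum_congr rfl fun j _ => hstep j, sum_range_sub (fun j => partialSups S (a + j)),
    partialSups_add_period hper le_rfl, add_zero, add_sub_cancel_left]

lemma strictRecord_add_period_iff (hper : ∀ t, S (t + n) = S t + k) (hn : 0 < n) {j : ℕ} :
    (∀ t < j + n, S t < S (j + n)) ↔ ∀ m < n, S (j + m) < S j + k := by
  rw [hper]
  refine ⟨fun h m hm => h _ (by omega), fun h t ht => ?_⟩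
  induction hd : j + n - t using Nat.strong_induction_on generalizing t with
  | _ d ih =>
    rcases le_or_gt j t with hjt | htj
    · obtain ⟨m, rfl⟩ := Nat.exists_eq_add_of_le hjt
      exact h m (by omega)
    · have := ih (j + n - (t + n)) (by omega) (t + n) (by omega) rfl
      rw [hper] at this
      omega

theorem card_filter_lt_add_period (hskip : ∀ t, S (t + 1) ≤ S t + 1)
    (hper : ∀ t, S (t + n) = S t + k) (hn : 0 < n) :
    #{j ∈ range n | ∀ m < n, S (j + m) < S j + k} = k := by
  simp_rw [← strictRecord_add_period_iff hper hn]
  exact card_filter_strictRecord_add_period hskip hper hn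

end SkipFree

section Cyclic

variable {n : ℕ} [NeZero n]

/-- Indices are read mod `n`, so beyond `m = n` this continues the walk periodically. -/
def cyclicPartialSum (y : Fin n → ℤ) (m : ℕ) : ℤ := ∑ i ∈ range m, y (i : Fin n)

def IsFirstPassage (k : ℕ) (y : Fin n → ℤ) : Prop :=
  (∀ m < n, cyclicPartialSum y m < k) ∧ k ≤ cyclicPartialSum y n

instance (k : ℕ) : DecidablePred (IsFirstPassage (n := n) k) :=
  fun _ => inferInstanceAs (Decidable (_ ∧ _))

def rotate (j : ℕ) (y : Fin n → ℤ) : Fin n → ℤ := fun i => y (i + j)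

variable {y : Fin n → ℤ} {k : ℕ}

lemma cyclicPartialSum_self : cyclicPartialSum y n = ∑ i, y i := by
  simp [cyclicPartialSum, ← Fin.sum_univ_eq_sum_range (fun i => y (i : Fin n))]

lemma cyclicPartialSum_add_period (t : ℕ) :
    cyclicPartialSum y (t + n) = cyclicPartialSum y t + ∑ i, y i := by
  rw [add_comm t, ← cyclicPartialSum_self, cyclicPartialSum, sum_range_add, add_comm]
  simp [cyclicPartialSum]

lemma cyclicPartialSum_succ_le (hy : ∀ i, y i ≤ 1) (t : ℕ) :
    cyclicPartialSum y (t + 1) ≤ cyclicPartialSum y t + 1 := by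
  rw [cyclicPartialSum, sum_range_succ]
  exact add_le_add_right (hy _) _

lemma cyclicPartialSum_rotate (j m : ℕ) :
    cyclicPartialSum (rotate j y) m = cyclicPartialSum y (j + m) - cyclicPartialSum y j := by
  simp [cyclicPartialSum, rotate, sum_range_add, add_comm]

lemma sum_rotate (j : ℕ) : ∑ i, rotate j y i = ∑ i, y i :=
  Fintype.sum_equiv (Equiv.addRight (j : Fin n)) _ _ fun _ => rfl

lemma sum_eq_of_isFirstPassage (hy : ∀ i, y i ≤ 1) (h : IsFirstPassage k y) : ∑ i, y i = k := by
  obtain ⟨hlt, hle⟩ := h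
  have hpos : 0 < n := Nat.pos_of_neZero n
  have := hlt (n - 1) (by omega)
  have := cyclicPartialSum_succ_le hy (n - 1)
  rw [Nat.sub_add_cancel hpos] at this
  rw [← cyclicPartialSum_self]
  omega

theorem card_filter_isFirstPassage_rotate (hy : ∀ i, y i ≤ 1) :
    #{j ∈ range n | IsFirstPassage k (rotate j y)} = if ∑ i, y i = k then k else 0 := by
  split_ifs with hsum
  · have hper (t : ℕ) : cyclicPartialSum y (t + n) = cyclicPartialSum y t + k := by
      rw [cyclicPartialSum_add_period, hsum]
    have hrot (j : ℕ) : IsFirstPassage k (rotate j y) ↔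
        ∀ m < n, cyclicPartialSum y (j + m) < cyclicPartialSum y j + k := by
      simp [IsFirstPassage, cyclicPartialSum_rotate, hper, sub_lt_iff_lt_add']
    simp_rw [hrot]
    exact card_filter_lt_add_period (cyclicPartialSum_succ_le hy) hper (Nat.pos_of_neZero n)
  · refine card_eq_zero.2 (filter_eq_empty_iff.2 fun j _ h => hsum ?_)
    rw [← sum_rotate j]
    exact sum_eq_of_isFirstPassage (fun i => hy _) h

theorem natCast_mul_measure_isFirstPassage {ν : Measure (Fin n → ℤ)}
    (hrot : ∀ j : ℕ, ν.map (rotate j) = ν) (hskip : ∀ᵐ y ∂ν, ∀ i, y i ≤ 1) (k : ℕ) :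
    (n : ENNReal) * ν {y | IsFirstPassage k y} = k * ν {y | ∑ i, y i = (k : ℤ)} := by
  have hmeasure_rotate (j : ℕ) :
      ν {y | IsFirstPassage k (rotate j y)} = ν {y | IsFirstPassage k y} := by
    conv_rhs => rw [← hrot j]
    rw [Measure.map_apply .of_discrete .of_discrete]
    rfl
  calc (n : ENNReal) * ν {y | IsFirstPassage k y}
      = ∑ j ∈ range n, ν {y | IsFirstPassage k (rotate j y)} := by simp [hmeasure_rotate]
    _ = ∫⁻ y, ∑ j ∈ range n, {y | IsFirstPassage k (rotate j y)}.indicator 1 y ∂ν := by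
        rw [lintegral_finsetSum _ fun _ _ => .of_discrete]
        simp [lintegral_indicator_one .of_discrete]
    _ = ∫⁻ y, {y | ∑ i, y i = (k : ℤ)}.indicator (fun _ => (k : ENNReal)) y ∂ν := by
        refine lintegral_congr_ae (hskip.mono fun y hy => ?_)
        simp only [Set.indicator_apply, Set.mem_ofPred_eq, Pi.one_apply]
        rw [sum_boole, card_filter_isFirstPassage_rotate hy]
        split_ifs <;> simp
    _ = k * ν {y | ∑ i, y i = (k : ℤ)} := lintegral_indicator_const .of_discrete _

end Cyclic

theorem ProbabilityTheory.iIndepFun.identDistrib_comp_injective {Ω ι κ β : Type*}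
    [MeasurableSpace Ω] [MeasurableSpace β] {μ : Measure Ω} [Fintype ι] {X : κ → Ω → β}
    (hind : iIndepFun X μ) {i₀ : κ} (hid : ∀ i, IdentDistrib (X i) (X i₀) μ μ) {f g : ι → κ}
    (hf : f.Injective) (hg : g.Injective) :
    IdentDistrib (fun ω i => X (f i) ω) (fun ω i => X (g i) ω) μ μ where
  aemeasurable_fst := aemeasurable_pi_lambda _ fun i => (hid (f i)).aemeasurable_fst
  aemeasurable_snd := aemeasurable_pi_lambda _ fun i => (hid (g i)).aemeasurable_fst
  map_eq := by
    rw [(hind.precomp hf).map_fun_eq_pi_map fun i => (hid (f i)).aemeasurable_fst,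
      (hind.precomp hg).map_fun_eq_pi_map fun i => (hid (g i)).aemeasurable_fst]
    simp only [(hid _).map_eq]

theorem kemperman_hitting_time_general
    {Ω : Type*} [MeasurableSpace Ω] (μ : Measure Ω)
    (Y : ℕ → Ω → ℤ)
    (hindep : iIndepFun Y μ)
    (hident : ∀ i, IdentDistrib (Y i) (Y 0) μ μ)
    (hbound : ∀ i, ∀ᵐ ω ∂μ, Y i ω ≤ 1)
    (R : ℕ → Ω → ℤ)
    (hR : ∀ n ω, R n ω = ∑ j ∈ Finset.range n, Y j ω)
    (k : ℕ) (n : ℕ) (hn : 1 ≤ n) :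
    (n : ENNReal) * μ {ω | (∀ m : ℕ, m < n → R m ω < (k : ℤ)) ∧ (k : ℤ) ≤ R n ω}
      = (k : ENNReal) * μ {ω | R n ω = (k : ℤ)} := by
  have : NeZero n := ⟨by omega⟩
  set V : Ω → Fin n → ℤ := fun ω i => Y i ω
  have hV : AEMeasurable V μ := aemeasurable_pi_lambda _ fun i => (hident i).aemeasurable_fst
  have hR_eq (ω : Ω) {m : ℕ} (hm : m ≤ n) : R m ω = cyclicPartialSum (V ω) m := by
    rw [hR, cyclicPartialSum]
    refine sum_congr rfl fun i hi => ?_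
    simp only [V, Fin.val_cast_of_lt (lt_of_lt_of_le (mem_range.1 hi) hm)]
  have hfirst : {ω | (∀ m : ℕ, m < n → R m ω < (k : ℤ)) ∧ (k : ℤ) ≤ R n ω}
      = V ⁻¹' {y | IsFirstPassage k y} := by
    ext ω
    simp +contextual only [Set.mem_ofPred_eq, Set.mem_preimage, IsFirstPassage, hR_eq ω le_rfl,
      hR_eq ω (Nat.le_of_lt _)]
  have hlevel : {ω | R n ω = (k : ℤ)} = V ⁻¹' {y | ∑ i, y i = (k : ℤ)} := by
    ext ω
    simp [hR_eq ω le_rfl, cyclicPartialSum_self]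
  rw [hfirst, hlevel, ← Measure.map_apply_of_aemeasurable hV .of_discrete,
    ← Measure.map_apply_of_aemeasurable hV .of_discrete]
  refine natCast_mul_measure_isFirstPassage (fun j => ?_) ?_ k
  · rw [AEMeasurable.map_map_of_aemeasurable Measurable.of_discrete.aemeasurable hV]
    exact (hindep.identDistrib_comp_injective hident
      (Fin.val_injective.comp (add_left_injective (j : Fin n))) Fin.val_injective).map_eq
  · rw [ae_map_iff hV .of_discrete]
    exact ae_all_iff.2 fun i => hbound i

/-- Kemperman's formula / hitting time theorem: for an upwards skip-free random
walk `R` with i.i.d. integer-valued increments `≤ 1` a.s., starting at `0`, the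
first passage time `τ(k)` over a level `k ≥ 1` satisfies
`n · P(τ(k) = n) = k · P(R n = k)` for every `n ≥ 1`. -/
theorem kemperman_hitting_time
    {Ω : Type*} [MeasurableSpace Ω] (μ : Measure Ω) [IsProbabilityMeasure μ]
    (Y : ℕ → Ω → ℤ)
    (hmeas : ∀ i, Measurable (Y i))
    (hindep : iIndepFun Y μ)
    (hident : ∀ i, IdentDistrib (Y i) (Y 0) μ μ)
    (hbound : ∀ i, ∀ᵐ ω ∂μ, Y i ω ≤ 1)
    (R : ℕ → Ω → ℤ)
    (hR : ∀ n ω, R n ω = ∑ j ∈ Finset.range n, Y j ω)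
    (k : ℕ) (hk : 1 ≤ k) (n : ℕ) (hn : 1 ≤ n) :
    (n : ENNReal) * μ {ω | (∀ m : ℕ, m < n → R m ω < (k : ℤ)) ∧ (k : ℤ) ≤ R n ω}
      = (k : ENNReal) * μ {ω | R n ω = (k : ℤ)} :=
  kemperman_hitting_time_general μ Y hindep hident hbound R hR k n hn
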